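/- arXiv:0707.2281 — 3 statements merged into one kernel-verified Lean document; each statement's English description precedes it below -/
import Mathlib

section
/- In a symplectic vector space M over a field K, for any two Lagrangians X there exists a Lagrangian opposite to X; moreover, the symplectic group Sp(M) acts transitively on ordered pairs (X,Y) of opposite Lagrangians. -/
/-!
Let `X` be Lagrangian. An isotropic subspace `Y` with `X ⊓ Y = ⊥` that is maximal with these
properties is Lagrangian. Indeed, if `Yᗮ ≤ X ⊔ Y`, the `X`-component of an element of `Yᗮ` is
orthogonal to `X ⊔ Y ⊇ Yᗮ`, so it lies in `Yᗮᗮ = Y` and vanishes, whence `Yᗮ = Y`; otherwise any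
`v ∈ Yᗮ` outside `X ⊔ Y` enlarges `Y`.

For an opposite pair `(X, Y)`, `ω` identifies `Y` with the dual of `X`, so a basis of `X` and the
dual basis of `Y` form a basis of `M` in which `ω` has the standard matrix `J`. The linear map
matching two such bases preserves `ω` and carries one pair to the other.
-/

namespace Stmt2

variable {K M : Type*} [Field K] [AddCommGroup M] [Module K M]

/-- A Lagrangian of the bilinear form ω: a subspace equal to its own orthogonal. -/
def IsLagrangian (ω : LinearMap.BilinForm K M) (L : Submodule K M) : Prop :=
  ω.orthogonal L = L

open Module Submodule LinearMap.BilinForm Set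

section

variable {ω : LinearMap.BilinForm K M} {X Y : Submodule K M}

namespace IsLagrangian

theorem apply_eq_zero (hX : IsLagrangian ω X) {u v : M} (hu : u ∈ X) (hv : v ∈ X) :
    ω u v = 0 := by
  rw [← hX] at hv
  exact hv u hu

theorem two_mul_finrank [FiniteDimensional K M] (hr : ω.IsRefl) (hnd : ω.Nondegenerate)
    (hX : IsLagrangian ω X) : 2 * finrank K X = finrank K M := by
  have := finrank_add_finrank_orthogonal hr X
  rwa [orthogonal_top_eq_bot hnd, inf_bot_eq, finrank_bot, add_zero, hX, ← two_mul] at this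

theorem isCompl_of_inf_eq_bot [FiniteDimensional K M] (hr : ω.IsRefl) (hnd : ω.Nondegenerate)
    (hX : IsLagrangian ω X) (hY : IsLagrangian ω Y) (hXY : X ⊓ Y = ⊥) : IsCompl X Y := by
  refine (isCompl_iff_disjoint X Y ?_).mpr (disjoint_iff.mpr hXY)
  have := hX.two_mul_finrank hr hnd
  have := hY.two_mul_finrank hr hnd
  omega

theorem isLagrangian_of_orthogonal_le_sup [FiniteDimensional K M] (hr : ω.IsRefl)
    (hnd : ω.Nondegenerate) (hX : IsLagrangian ω X) (hXY : X ⊓ Y = ⊥)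
    (hY : Y ≤ ω.orthogonal Y) (h : ω.orthogonal Y ≤ X ⊔ Y) : IsLagrangian ω Y := by
  refine le_antisymm (fun z hz => ?_) hY
  obtain ⟨x, hx, y, hy, rfl⟩ := mem_sup.mp (h hz)
  have hxY : x ∈ ω.orthogonal Y := by
    simpa using sub_mem hz (hY hy)
  have hxYY : x ∈ ω.orthogonal (ω.orthogonal Y) := by
    intro w hw
    obtain ⟨x', hx', y', hy', rfl⟩ := mem_sup.mp (h hw)
    simp [hX.apply_eq_zero hx' hx, hxY y' hy']
  rw [orthogonal_orthogonal hnd hr] at hxYY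
  have hx0 : x = 0 := (mem_bot K).mp (hXY ▸ mem_inf.mpr ⟨hx, hxYY⟩)
  simpa [hx0] using hy

end IsLagrangian

theorem sup_span_singleton_le_orthogonal (halt : ω.IsAlt) (hY : Y ≤ ω.orthogonal Y) {v : M}
    (hv : v ∈ ω.orthogonal Y) :
    Y ⊔ span K {v} ≤ ω.orthogonal (Y ⊔ span K {v}) := by
  rintro _ hw _ hz
  obtain ⟨y, hy, _, ha, rfl⟩ := mem_sup.mp hz
  obtain ⟨y', hy', _, hb, rfl⟩ := mem_sup.mp hw
  obtain ⟨a, rfl⟩ := mem_span_singleton.mp ha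
  obtain ⟨b, rfl⟩ := mem_span_singleton.mp hb
  have hvy' : ω v y' = 0 := halt.isRefl _ _ (hv y' hy')
  simp [hY hy' y hy, hv y hy, hvy', halt v]

theorem exists_isLagrangian_inf_eq_bot [FiniteDimensional K M] (halt : ω.IsAlt)
    (hnd : ω.Nondegenerate) (hX : IsLagrangian ω X) :
    ∃ Y, IsLagrangian ω Y ∧ X ⊓ Y = ⊥ := by
  obtain ⟨Y, ⟨hY, hXY⟩, hmax⟩ := set_has_maximal_iff_noetherian.mpr inferInstance
    {Y : Submodule K M | Y ≤ ω.orthogonal Y ∧ X ⊓ Y = ⊥} ⟨⊥, by simp, by simp⟩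
  refine ⟨Y, ?_, hXY⟩
  by_contra hYL
  obtain ⟨v, hv, hvXY⟩ := SetLike.not_le_iff_exists.mp
    (mt (hX.isLagrangian_of_orthogonal_le_sup halt.isRefl hnd hXY hY) hYL)
  have hdisj : Disjoint X (Y ⊔ span K {v}) :=
    (disjoint_iff.mpr hXY).disjoint_sup_right_of_disjoint_sup_left
      ((disjoint_span_singleton' (by rintro rfl; exact hvXY (zero_mem _))).mpr hvXY)
  refine hmax (Y ⊔ span K {v}) ⟨sup_span_singleton_le_orthogonal halt hY hv,
    disjoint_iff.mp hdisj⟩ (left_lt_sup.mpr ?_)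
  exact fun h => hvXY (mem_sup_right (h (mem_span_singleton_self v)))

theorem IsLagrangian.exists_basis_apply_eq_ite [FiniteDimensional K M] {ι : Type*} [Finite ι]
    [DecidableEq ι] (hX : IsLagrangian ω X) (hXY : Disjoint X Y)
    (hdim : finrank K Y = finrank K X) (e : Basis ι K X) :
    ∃ f : Basis ι K Y, ∀ i j, ω (e i) (f j) = if i = j then 1 else 0 := by
  let ρ : Y →ₗ[K] Dual K X := (ω.compl₁₂ X.subtype Y.subtype).flip
  have hρ : Function.Injective ρ := by
    refine (injective_iff_map_eq_zero ρ).mpr fun y hy => ?_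
    have hyX : (y : M) ∈ X := hX ▸ fun x hx => LinearMap.congr_fun hy ⟨x, hx⟩
    simpa using hXY.le_bot ⟨hyX, y.2⟩
  let ρe := ρ.linearEquivOfInjective hρ (by rw [Subspace.dual_finrank_eq, hdim])
  refine ⟨e.dualBasis.map ρe.symm, fun i j => ?_⟩
  change ρe (ρe.symm (e.dualBasis j)) (e i) = _
  rw [ρe.apply_symm_apply, e.dualBasis_apply_self]

theorem IsLagrangian.exists_basis_apply_eq_J [FiniteDimensional K M] {ι : Type*} [Finite ι]
    [DecidableEq ι] (halt : ω.IsAlt) (hnd : ω.Nondegenerate) (hX : IsLagrangian ω X)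
    (hY : IsLagrangian ω Y) (hXY : X ⊓ Y = ⊥) (e : Basis ι K X) :
    ∃ b : Basis (ι ⊕ ι) K M, (∀ i j, ω (b i) (b j) = Matrix.J ι K i j) ∧
      span K (range (b ∘ Sum.inr)) = X ∧ span K (range (b ∘ Sum.inl)) = Y := by
  have hc := hX.isCompl_of_inf_eq_bot halt.isRefl hnd hY hXY
  obtain ⟨f, hef⟩ := hX.exists_basis_apply_eq_ite hc.disjoint (by
    have := hX.two_mul_finrank halt.isRefl hnd
    have := hY.two_mul_finrank halt.isRefl hnd
    omega) e
  let b := (f.prod e).map (prodEquivOfIsCompl Y X hc.symm)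
  have hbl : ∀ i, b (.inl i) = f i := fun i => by simp [b]
  have hbr : ∀ i, b (.inr i) = e i := fun i => by simp [b]
  refine ⟨b, ?_, ?_, ?_⟩
  · rintro (i | i) (j | j)
    · simp [hbl, hY.apply_eq_zero (f i).2 (f j).2, Matrix.J]
    · rw [hbl, hbr, ← LinearMap.IsAlt.neg halt (e j : M), hef]
      simp [Matrix.J, Matrix.one_apply, eq_comm]
    · simp [hbl, hbr, hef, Matrix.J, Matrix.one_apply]
    · simp [hbr, hX.apply_eq_zero (e i).2 (e j).2, Matrix.J]
  · rw [show b ∘ Sum.inr = X.subtype ∘ e from funext hbr, range_comp, span_image, e.span_eq,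
      map_subtype_top]
  · rw [show b ∘ Sum.inl = Y.subtype ∘ f from funext hbl, range_comp, span_image, f.span_eq,
      map_subtype_top]

theorem apply_basis_equiv_apply {κ : Type*} {b b' : Basis κ K M}
    (h : ∀ i j, ω (b i) (b j) = ω (b' i) (b' j)) (u v : M) :
    ω (b.equiv b' (Equiv.refl κ) u) (b.equiv b' (Equiv.refl κ) v) = ω u v := by
  let g := b.equiv b' (Equiv.refl κ)
  have hg : ω.compl₁₂ (g : M →ₗ[K] M) (g : M →ₗ[K] M) = ω :=
    LinearMap.ext_basis b b fun i j => by simp [g, h]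
  exact LinearMap.congr_fun₂ hg u v

theorem map_span_range_basis_equiv {κ ι : Type*} (b b' : Basis κ K M) (s : ι → κ) :
    (span K (range (b ∘ s))).map (b.equiv b' (Equiv.refl κ) : M →ₗ[K] M) =
      span K (range (b' ∘ s)) := by
  rw [map_span, ← range_comp]
  congr 2
  ext i
  simp

end

theorem exists_opposite_and_transitivity
    [FiniteDimensional K M] (ω : LinearMap.BilinForm K M)
    (halt : ω.IsAlt) (hnd : ω.Nondegenerate) :
    (∀ X : Submodule K M, IsLagrangian ω X →
      ∃ Y : Submodule K M, IsLagrangian ω Y ∧ X ⊓ Y = ⊥) ∧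
    (∀ X Y X' Y' : Submodule K M,
      IsLagrangian ω X → IsLagrangian ω Y → X ⊓ Y = ⊥ →
      IsLagrangian ω X' → IsLagrangian ω Y' → X' ⊓ Y' = ⊥ →
      ∃ g : M ≃ₗ[K] M, (∀ u v : M, ω (g u) (g v) = ω u v) ∧
        X.map (g : M →ₗ[K] M) = X' ∧ Y.map (g : M →ₗ[K] M) = Y') := by
  refine ⟨fun X hX => exists_isLagrangian_inf_eq_bot halt hnd hX, ?_⟩
  intro X Y X' Y' hX hY hXY hX' hY' hXY'
  have hdim : finrank K X' = finrank K X := by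
    have := hX.two_mul_finrank halt.isRefl hnd
    have := hX'.two_mul_finrank halt.isRefl hnd
    omega
  obtain ⟨b, hb, hbX, hbY⟩ := hX.exists_basis_apply_eq_J halt hnd hY hXY (finBasis K X)
  obtain ⟨b', hb', hbX', hbY'⟩ :=
    hX'.exists_basis_apply_eq_J halt hnd hY' hXY' (finBasisOfFinrankEq K X' hdim)
  refine ⟨b.equiv b' (Equiv.refl _), apply_basis_equiv_apply fun i j => by rw [hb, hb'], ?_, ?_⟩
  · rw [← hbX', ← map_span_range_basis_equiv b b', hbX]
  · rw [← hbY', ← map_span_range_basis_equiv b b', hbY]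

end Stmt2
end

section
/- Let Γ be a graph with the star property: for every finite set of vertices x₀,…,x_k there is a vertex y distinct from and adjacent to all of them. Then the simplicial flag complex Fl(Γ) (whose k-simplices are (k+1)-tuples of pairwise equal-or-adjacent vertices) is acyclic: every k-cycle of the simplicial chain complex is a boundary. -/
/- STATEMENT 8: If a graph Γ has the star property (for every finite set of vertices
there is a vertex distinct from and adjacent to all of them), then the simplicial chain
complex of its flag complex Fl(Γ) is acyclic: every k-cycle (k ≥ 1) is a boundary. -/

namespace Stmt8

variable {V : Type*} (G : SimpleGraph V)

/-- The star property. -/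
def HasStarProperty : Prop :=
  ∀ s : Finset V, ∃ y, y ∉ s ∧ ∀ x ∈ s, G.Adj y x

/-- A k-simplex of the flag complex: a (k+1)-tuple of pairwise equal-or-adjacent
vertices. -/
def FlagSimplex (k : ℕ) : Type _ :=
  {f : Fin (k + 1) → V // ∀ i j, f i = f j ∨ G.Adj (f i) (f j)}

/-- The ν-th face of a simplex. -/
def face {k : ℕ} (ν : Fin (k + 2)) (s : FlagSimplex G (k + 1)) : FlagSimplex G k :=
  ⟨s.1 ∘ ν.succAbove, fun i j => s.2 _ _⟩

/-- The boundary of a single simplex: ∂(x₀,…,x_{k+1}) = Σ_ν (-1)^ν (x₀,…,x̂_ν,…,x_{k+1}). -/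
noncomputable def bdrySimplex {k : ℕ} (s : FlagSimplex G (k + 1)) :
    FlagSimplex G k →₀ ℤ :=
  ∑ ν : Fin (k + 2), (-1 : ℤ) ^ (ν : ℕ) • Finsupp.single (face G ν s) 1

/-- The boundary operator on simplicial chains. -/
noncomputable def bdry {k : ℕ} (c : FlagSimplex G (k + 1) →₀ ℤ) :
    FlagSimplex G k →₀ ℤ :=
  c.sum fun s m => m • bdrySimplex G s

/-! Given a cycle `c`, the star property provides a vertex `y` adjacent to every vertex
occurring in `c`. Writing `y * σ = (y, x₀, …, x_k)` for the cone over `σ = (x₀, …, x_k)`, one has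
`∂ (y * c) = c - y * ∂ c` on chains supported on simplices that `y` sees; for a cycle the last
term vanishes, so `c = ∂ (y * c)`. -/

section Cone

variable {G} {y : V} {k : ℕ}

def ConeCompatible (y : V) (s : FlagSimplex G k) : Prop :=
  ∀ i, y = s.1 i ∨ G.Adj y (s.1 i)

lemma ConeCompatible.face {s : FlagSimplex G (k + 1)} (h : ConeCompatible y s)
    (ν : Fin (k + 2)) : ConeCompatible y (face G ν s) :=
  fun i => h (ν.succAbove i)

lemma HasStarProperty.exists_coneCompatible (hstar : HasStarProperty G)
    (S : Finset (FlagSimplex G k)) : ∃ y, ∀ s ∈ S, ConeCompatible y s := by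
  classical
  obtain ⟨y, -, hy⟩ := hstar (S.biUnion fun s => Finset.univ.image s.1)
  exact ⟨y, fun s hs i => Or.inr <| hy _ <|
    Finset.mem_biUnion.2 ⟨s, hs, Finset.mem_image_of_mem _ (Finset.mem_univ i)⟩⟩

def FlagSimplex.cons (a : V) (s : FlagSimplex G k) (h : ConeCompatible a s) :
    FlagSimplex G (k + 1) :=
  ⟨Fin.cons a s.1,
    Fin.cases (Fin.cases (Or.inl rfl) fun j => h j) fun i =>
      Fin.cases ((h i).imp Eq.symm SimpleGraph.Adj.symm) fun j => s.2 i j⟩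

/-- The apex of the cone over `s`: `y` when `y` is compatible with `s`, otherwise the junk
value `s 0`, which makes `cone y` a total map on simplices. -/
noncomputable def coneVertex (y : V) (s : FlagSimplex G k) : V :=
  open Classical in if ConeCompatible y s then y else s.1 0

lemma coneVertex_eq {s : FlagSimplex G k} (h : ConeCompatible y s) : coneVertex y s = y :=
  if_pos h

lemma coneCompatible_coneVertex (y : V) (s : FlagSimplex G k) :
    ConeCompatible (coneVertex y s) s := by
  unfold coneVertex
  split_ifs with h
  · exact h
  · exact s.2 0

noncomputable def cone (y : V) (s : FlagSimplex G k) : FlagSimplex G (k + 1) :=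
  s.cons (coneVertex y s) (coneCompatible_coneVertex y s)

lemma face_zero_cone (y : V) (s : FlagSimplex G (k + 1)) : face G 0 (cone y s) = s :=
  Subtype.ext <| funext fun i => by simp [face, cone, FlagSimplex.cons]

lemma face_succ_cone {s : FlagSimplex G (k + 1)} (h : ConeCompatible y s) (ν : Fin (k + 2)) :
    face G ν.succ (cone y s) = cone y (face G ν s) := by
  refine Subtype.ext <| funext fun i => ?_
  cases i using Fin.cases with
  | zero =>
    change (Fin.cons (coneVertex y s) s.1 : Fin (k + 3) → V) (ν.succ.succAbove 0) =
      coneVertex y (face G ν s)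
    rw [Fin.succ_succAbove_zero, Fin.cons_zero, coneVertex_eq h, coneVertex_eq (h.face ν)]
  | succ i =>
    change (Fin.cons (coneVertex y s) s.1 : Fin (k + 3) → V) (ν.succ.succAbove i.succ) =
      s.1 (ν.succAbove i)
    rw [Fin.succ_succAbove_succ, Fin.cons_succ]

lemma bdrySimplex_cone {s : FlagSimplex G (k + 1)} (h : ConeCompatible y s) :
    bdrySimplex G (cone y s) =
      Finsupp.single s 1 - Finsupp.mapDomain (cone y) (bdrySimplex G s) := by
  have hcone : Finsupp.mapDomain (cone y) (bdrySimplex G s) =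
      ∑ ν : Fin (k + 2), (-1 : ℤ) ^ (ν : ℕ) • Finsupp.single (cone y (face G ν s)) 1 := by
    simp only [bdrySimplex, Finsupp.mapDomain_finsetSum, Finsupp.mapDomain_smul,
      Finsupp.mapDomain_single]
  rw [hcone, bdrySimplex, Fin.sum_univ_succ, face_zero_cone, sub_eq_add_neg]
  simp only [Fin.val_zero, pow_zero, one_smul, Fin.val_succ, pow_succ, mul_neg_one, neg_smul,
    Finset.sum_neg_distrib, face_succ_cone h]

lemma bdry_eq_linearCombination (c : FlagSimplex G (k + 1) →₀ ℤ) :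
    bdry G c = Finsupp.linearCombination ℤ (bdrySimplex G) c :=
  rfl

lemma bdry_mapDomain_cone (c : FlagSimplex G (k + 1) →₀ ℤ)
    (hc : ∀ s ∈ c.support, ConeCompatible y s) :
    bdry G (Finsupp.mapDomain (cone y) c) = c - Finsupp.mapDomain (cone y) (bdry G c) := by
  rw [bdry_eq_linearCombination, bdry_eq_linearCombination, Finsupp.linearCombination_mapDomain,
    ← Finsupp.lmapDomain_apply ℤ ℤ, Finsupp.apply_linearCombination,
    Finsupp.linearCombination_apply, Finsupp.linearCombination_apply]
  calc c.sum (fun s m => m • bdrySimplex G (cone y s))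
      = c.sum (fun s m => m • (Finsupp.single s 1 -
          Finsupp.lmapDomain ℤ ℤ (cone y) (bdrySimplex G s))) :=
        Finsupp.sum_congr fun s hs => by rw [bdrySimplex_cone (hc s hs)]; rfl
    _ = _ := by
      simp only [smul_sub, Finsupp.sum_sub, Finsupp.smul_single_one, Finsupp.sum_single,
        Function.comp_apply]

end Cone

theorem flag_complex_acyclic (hstar : HasStarProperty G) (k : ℕ)
    (c : FlagSimplex G (k + 1) →₀ ℤ) (hc : bdry G c = 0) :
    ∃ d : FlagSimplex G (k + 2) →₀ ℤ, bdry G d = c := by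
  obtain ⟨y, hy⟩ := hstar.exists_coneCompatible c.support
  refine ⟨Finsupp.mapDomain (cone y) c, ?_⟩
  rw [bdry_mapDomain_cone c hy, hc, Finsupp.mapDomain_zero, sub_zero]

end Stmt8
end

section
/- Let X, Y be opposite Lagrangians in a 2n-dimensional symplectic space M over a field K of characteristic ≠ 2, with dual bases x, y, and Z = u_t(Y) with t symmetric invertible, so that X, Y, Z are pairwise opposite. Then the Kashiwara form q(x,y,z) = ω(x,y) + ω(y,z) + ω(z,x) on X ⊕ Y ⊕ Z is nondegenerate and its Witt class equals [t] ∈ W(K): X ⊕ Y ⊕ 0 is a hyperbolic (hence metabolic) subspace, and its orthogonal complement {(tz, z, z) : z ∈ Kⁿ} carries the form z ↦ zᵀ t z. -/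
/- In the basis adapted to X ⊕ Y ⊕ Z the Gram matrix of the Kashiwara form is
[[H, G], [Gᵀ, 0]] with H the hyperbolic Gram matrix of X ⊕ Y. Since H R = -G for R = (t; 1), the
block change of basis [[1, R], [0, 1]], which sends (0, 0, z) to (tz, z, z), turns it into
H ⊕ t; H is metabolic, so [q] = [t] in W(K). A vector in the radical of q is orthogonal to
X ⊕ Y, hence of the form (tz, z, z), and pairing it with every (tz', z', z') gives zᵀ t = 0,
so z = 0 because t is invertible. -/

/- STATEMENT 18: X, Y opposite Lagrangians in the standard 2n-dimensional symplectic
space over K (char ≠ 2) with dual bases, Z = u_t(Y) with t symmetric invertible, so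
X, Y, Z pairwise opposite.  In coordinates (a,b,c) on X ⊕ Y ⊕ Z, the Kashiwara form
q(a,b,c) = ω(x_a,y_b) + ω(y_b,z_c) + ω(z_c,x_a) = -a·b + b·(tc) + c·a (polarized to the
symmetric bilinear form B) is nondegenerate and its Witt class equals [t]:
X ⊕ Y ⊕ 0 is a metabolic (hyperbolic) subspace, its orthogonal complement is
{(tz,z,z) : z ∈ Kⁿ}, on which the form is z ↦ zᵀtz. -/

namespace Stmt18
open Matrix

variable {K : Type*} [Field K]

/-- The totally isotropic condition for a subspace W with respect to the symmetric
bilinear form with Gram matrix A. -/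
def IsTotIso {ι : Type} [Fintype ι] (A : Matrix ι ι K) (W : Submodule K (ι → K)) : Prop :=
  ∀ x ∈ W, ∀ y ∈ W, x ⬝ᵥ A.mulVec y = 0

/-- A nondegenerate form is metabolic if it has a totally isotropic subspace of half
its dimension (so it vanishes in the Witt group). -/
def IsMetabolic {ι : Type} [Fintype ι] [DecidableEq ι] (A : Matrix ι ι K) : Prop :=
  IsUnit A ∧ ∃ W : Submodule K (ι → K), IsTotIso A W ∧
    2 * Module.finrank K W = Fintype.card ι

/-- Congruence (isometry) of the forms with Gram matrices A and B: B = Pᵀ A P for an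
invertible change of basis P. -/
def Congruent {ι κ : Type} [Fintype ι] [DecidableEq ι] [Fintype κ] [DecidableEq κ] (A : Matrix ι ι K) (B : Matrix κ κ K) : Prop :=
  ∃ (P : Matrix ι κ K) (Q : Matrix κ ι K), P * Q = 1 ∧ Q * P = 1 ∧ B = Pᵀ * A * P

/-- Orthogonal direct sum of two forms. -/
def dsum {ι κ : Type} (A : Matrix ι ι K) (B : Matrix κ κ K) : Matrix (ι ⊕ κ) (ι ⊕ κ) K :=
  Matrix.fromBlocks A 0 0 B

/-- Witt equivalence: equality of the classes of A and B in the Witt group W(K),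
i.e. A and B become isometric after adding metabolic forms. -/
def WittEquiv {ι κ : Type} [Fintype ι] [DecidableEq ι] [Fintype κ] [DecidableEq κ]
    (A : Matrix ι ι K) (B : Matrix κ κ K) : Prop :=
  ∃ (m l : ℕ) (M : Matrix (Fin m) (Fin m) K) (N : Matrix (Fin l) (Fin l) K),
    IsMetabolic M ∧ IsMetabolic N ∧ Congruent (dsum A M) (dsum B N)

variable {n : ℕ}

/-- Coordinates (a,b,c) on X ⊕ Y ⊕ Z. -/
abbrev V3 (K : Type*) (n : ℕ) := (Fin n → K) × (Fin n → K) × (Fin n → K)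

/-- The Kashiwara quadratic form q(a,b,c) = ω(x_a,y_b)+ω(y_b,z_c)+ω(z_c,x_a). -/
def qK (t : Matrix (Fin n) (Fin n) K) (v : V3 K n) : K :=
  -(v.1 ⬝ᵥ v.2.1) + v.2.1 ⬝ᵥ t.mulVec v.2.2 + v.2.2 ⬝ᵥ v.1

/-- Its polarization: the associated symmetric bilinear form (char ≠ 2). -/
def BK (t : Matrix (Fin n) (Fin n) K) (v w : V3 K n) : K :=
  (qK t (v + w) - qK t v - qK t w) / 2

/-- The standard basis of X ⊕ Y ⊕ Z. -/
def bas (i : (Fin n ⊕ Fin n) ⊕ Fin n) : V3 K n :=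
  match i with
  | Sum.inl (Sum.inl i) => (Pi.single i 1, 0, 0)
  | Sum.inl (Sum.inr i) => (0, Pi.single i 1, 0)
  | Sum.inr i => (0, 0, Pi.single i 1)

/-- The Gram matrix of the Kashiwara form. -/
def gramK (t : Matrix (Fin n) (Fin n) K) :
    Matrix ((Fin n ⊕ Fin n) ⊕ Fin n) ((Fin n ⊕ Fin n) ⊕ Fin n) K :=
  Matrix.of fun i j => BK t (bas i) (bas j)

section Congruence

variable {ι κ μ ν : Type} [Fintype ι] [DecidableEq ι] [Fintype κ] [DecidableEq κ]
  [Fintype μ] [DecidableEq μ] [Fintype ν] [DecidableEq ν]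

lemma Congruent.refl (A : Matrix ι ι K) : Congruent A A :=
  ⟨1, 1, Matrix.mul_one 1, Matrix.mul_one 1, by simp⟩

lemma Congruent.symm {A : Matrix ι ι K} {B : Matrix κ κ K} (h : Congruent A B) :
    Congruent B A := by
  obtain ⟨P, Q, hPQ, hQP, rfl⟩ := h
  refine ⟨Q, P, hQP, hPQ, ?_⟩
  have hQP' : Qᵀ * Pᵀ = 1 := by rw [← transpose_mul, hPQ, transpose_one]
  calc A = (Qᵀ * Pᵀ) * A * (P * Q) := by rw [hQP', hPQ, Matrix.one_mul, Matrix.mul_one]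
    _ = Qᵀ * (Pᵀ * A * P) * Q := by simp only [Matrix.mul_assoc]

lemma Congruent.trans {A : Matrix ι ι K} {B : Matrix κ κ K} {C : Matrix μ μ K}
    (hAB : Congruent A B) (hBC : Congruent B C) : Congruent A C := by
  obtain ⟨P, Q, hPQ, hQP, rfl⟩ := hAB
  obtain ⟨P', Q', hPQ', hQP', rfl⟩ := hBC
  refine ⟨P * P', Q' * Q, ?_, ?_, ?_⟩
  · rw [Matrix.mul_assoc, ← Matrix.mul_assoc P', hPQ', Matrix.one_mul, hPQ]
  · rw [Matrix.mul_assoc, ← Matrix.mul_assoc Q, hQP, Matrix.one_mul, hQP']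
  · simp only [transpose_mul, Matrix.mul_assoc]

lemma congruent_submatrix (A : Matrix ι ι K) (e : κ ≃ ι) : Congruent A (A.submatrix e e) := by
  refine ⟨(1 : Matrix ι ι K).submatrix (Equiv.refl ι) e,
    (1 : Matrix ι ι K).submatrix e (Equiv.refl ι), ?_, ?_, ?_⟩
  · rw [mul_submatrix_one]
    simp
  · rw [mul_submatrix_one]
    simp
  · rw [transpose_submatrix, transpose_one, one_submatrix_mul, mul_submatrix_one]
    simp

lemma Congruent.dsum {A : Matrix ι ι K} {A' : Matrix κ κ K} {B : Matrix μ μ K}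
    {B' : Matrix ν ν K} (hA : Congruent A A') (hB : Congruent B B') :
    Congruent (dsum A B) (dsum A' B') := by
  obtain ⟨P, Q, hPQ, hQP, rfl⟩ := hA
  obtain ⟨P', Q', hPQ', hQP', rfl⟩ := hB
  refine ⟨fromBlocks P 0 0 P', fromBlocks Q 0 0 Q', ?_, ?_, ?_⟩
  · simp [fromBlocks_multiply, hPQ, hPQ', fromBlocks_one]
  · simp [fromBlocks_multiply, hQP, hQP', fromBlocks_one]
  · simp [Stmt18.dsum, fromBlocks_transpose, fromBlocks_multiply]

lemma congruent_dsum_comm (A : Matrix ι ι K) (B : Matrix κ κ K) :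
    Congruent (dsum A B) (dsum B A) := by
  simpa [dsum] using congruent_submatrix (dsum A B) (Equiv.sumComm κ ι)

lemma congruent_dsum_of_isEmpty [IsEmpty κ] (A : Matrix ι ι K) (B : Matrix κ κ K) :
    Congruent (dsum A B) A := by
  convert congruent_submatrix (dsum A B) (Equiv.sumEmpty ι κ).symm
  ext i j
  simp [dsum]

end Congruence

def hyperbolic {ι : Type} [DecidableEq ι] (c : K) : Matrix (ι ⊕ ι) (ι ⊕ ι) K :=
  fromBlocks 0 (c • 1) (c • 1) 0

lemma hyperbolic_transpose {ι : Type} [DecidableEq ι] (c : K) :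
    (hyperbolic c : Matrix (ι ⊕ ι) (ι ⊕ ι) K)ᵀ = hyperbolic c := by
  simp [hyperbolic, fromBlocks_transpose]

section Metabolic

variable {ι κ μ : Type} [Fintype ι] [DecidableEq ι] [Fintype κ] [DecidableEq κ]
  [Fintype μ] [DecidableEq μ]

lemma Congruent.isUnit {A : Matrix ι ι K} {B : Matrix κ κ K} (hAB : Congruent A B)
    (hA : IsUnit A) : IsUnit B := by
  obtain ⟨P, Q, hPQ, hQP, rfl⟩ := hAB
  obtain ⟨u, rfl⟩ := hA
  have hQP' : Qᵀ * Pᵀ = 1 := by rw [← transpose_mul, hPQ, transpose_one]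
  have hPQ' : Pᵀ * Qᵀ = 1 := by rw [← transpose_mul, hQP, transpose_one]
  set U : Matrix ι ι K := ↑u
  set V : Matrix ι ι K := ↑u⁻¹
  refine ⟨⟨Pᵀ * U * P, Q * V * Qᵀ, ?_, ?_⟩, rfl⟩
  · calc Pᵀ * U * P * (Q * V * Qᵀ) = Pᵀ * (U * (P * Q) * V) * Qᵀ := by
          simp only [Matrix.mul_assoc]
      _ = 1 := by rw [hPQ, Matrix.mul_one, Units.mul_inv, Matrix.mul_one, hPQ']
  · calc Q * V * Qᵀ * (Pᵀ * U * P) = Q * (V * (Qᵀ * Pᵀ) * U) * P := by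
          simp only [Matrix.mul_assoc]
      _ = 1 := by rw [hQP', Matrix.mul_one, Units.inv_mul, Matrix.mul_one, hQP]

lemma IsMetabolic.of_congruent {A : Matrix ι ι K} {B : Matrix κ κ K} (hAB : Congruent A B)
    (hA : IsMetabolic A) : IsMetabolic B := by
  refine ⟨hAB.isUnit hA.1, ?_⟩
  obtain ⟨P, Q, hPQ, hQP, rfl⟩ := hAB
  obtain ⟨-, W, hW, hrank⟩ := hA
  let e : (ι → K) ≃ₗ[K] (κ → K) := LinearEquiv.ofLinearMap Q.mulVecLin P.mulVecLin
    (by rw [← mulVecLin_mul, hQP, mulVecLin_one]) (by rw [← mulVecLin_mul, hPQ, mulVecLin_one])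
  refine ⟨W.map e.toLinearMap, ?_, ?_⟩
  · rintro _ ⟨x, hx, rfl⟩ _ ⟨y, hy, rfl⟩
    have hPQv : ∀ v : ι → K, P *ᵥ Q *ᵥ v = v := fun v => by
      rw [mulVec_mulVec, hPQ, one_mulVec]
    simp only [e, LinearEquiv.coe_coe, LinearEquiv.coe_ofLinearMap, mulVecLin_apply]
    rw [← mulVec_mulVec, ← mulVec_mulVec, hPQv, dotProduct_mulVec, vecMul_transpose, hPQv]
    exact hW x hx y hy
  · rw [LinearEquiv.finrank_map_eq, hrank, ← Module.finrank_fintype_fun_eq_card K,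
      e.finrank_eq, Module.finrank_fintype_fun_eq_card]

lemma isMetabolic_of_isEmpty [IsEmpty ι] (A : Matrix ι ι K) : IsMetabolic A :=
  ⟨Subsingleton.elim 1 A ▸ isUnit_one, ⊥,
    fun x hx y _ => by simp [(Submodule.mem_bot K).1 hx], by simp⟩

lemma isMetabolic_hyperbolic {c : K} (hc : c ≠ 0) :
    IsMetabolic (hyperbolic c : Matrix (ι ⊕ ι) (ι ⊕ ι) K) := by
  have hmul : ∀ a b : K,
      hyperbolic a * hyperbolic b = (a * b) • (1 : Matrix (ι ⊕ ι) (ι ⊕ ι) K) :=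
    fun a b => by simp [hyperbolic, fromBlocks_multiply, smul_smul, ← fromBlocks_one,
      fromBlocks_smul, mul_comm b]
  refine ⟨⟨⟨hyperbolic c, hyperbolic c⁻¹, ?_, ?_⟩, rfl⟩, ?_⟩
  · rw [hmul, mul_inv_cancel₀ hc, one_smul]
  · rw [hmul, inv_mul_cancel₀ hc, one_smul]
  let π : (ι ⊕ ι → K) →ₗ[K] (ι → K) := LinearMap.funLeft K K Sum.inr
  refine ⟨LinearMap.ker π, fun x hx y hy => ?_, ?_⟩
  · have hy' : ∀ i, y (Sum.inr i) = 0 := congrFun (LinearMap.mem_ker.1 hy)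
    have hx' : ∀ i, x (Sum.inr i) = 0 := congrFun (LinearMap.mem_ker.1 hx)
    simp [hyperbolic, dotProduct, mulVec, hx', hy']
  · have hπ : LinearMap.range π = ⊤ :=
      LinearMap.range_eq_top.2 (LinearMap.funLeft_surjective_of_injective K K _ Sum.inr_injective)
    have := π.finrank_range_add_finrank_ker
    rw [hπ, finrank_top] at this
    simp only [Module.finrank_fintype_fun_eq_card, Fintype.card_sum] at this ⊢
    omega

lemma congruent_fromBlocks_of_mul_eq_neg {H : Matrix ι ι K} {G : Matrix ι κ K}
    (hH : Hᵀ = H) {R : Matrix ι κ K} (hR : H * R = -G) (D : Matrix κ κ K) :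
    Congruent (fromBlocks H G Gᵀ D) (dsum H (Rᵀ * G + D)) := by
  refine ⟨fromBlocks 1 R 0 1, fromBlocks 1 (-R) 0 1, ?_, ?_, ?_⟩
  · simp [fromBlocks_multiply, fromBlocks_one]
  · simp [fromBlocks_multiply, fromBlocks_one]
  · have hRH : Rᵀ * H = -Gᵀ := by
      rw [← transpose_transpose (Rᵀ * H), transpose_mul, transpose_transpose, hH, hR,
        transpose_neg]
    simp [dsum, fromBlocks_transpose, fromBlocks_multiply, hR, hRH]

lemma WittEquiv.of_congruent_dsum {A : Matrix ι ι K} {M : Matrix μ μ K} {B : Matrix κ κ K}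
    (h : Congruent A (dsum M B)) (hM : IsMetabolic M) : WittEquiv A B := by
  let e := (Fintype.equivFin μ).symm
  refine ⟨0, Fintype.card μ, 1, M.submatrix e e, isMetabolic_of_isEmpty _,
    hM.of_congruent (congruent_submatrix M e), ?_⟩
  exact (congruent_dsum_of_isEmpty A _).trans <| h.trans <| (congruent_dsum_comm M B).trans <|
    (Congruent.refl B).dsum (congruent_submatrix M e)

end Metabolic

lemma BK_comm (t : Matrix (Fin n) (Fin n) K) (v w : V3 K n) : BK t v w = BK t w v := by
  rw [BK, BK, add_comm v w, sub_right_comm]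

lemma BK_eq (t : Matrix (Fin n) (Fin n) K) (v w : V3 K n) :
    BK t v w = (w.1 ⬝ᵥ (v.2.2 - v.2.1) + w.2.1 ⬝ᵥ (t *ᵥ v.2.2 - v.1)
      + w.2.2 ⬝ᵥ (v.1 + tᵀ *ᵥ v.2.1)) / 2 := by
  rw [mulVec_transpose, dotProduct_add w.2.2, dotProduct_comm w.2.2 (v.2.1 ᵥ* t),
    ← dotProduct_mulVec]
  simp only [BK, qK, Prod.fst_add, Prod.snd_add, add_dotProduct, dotProduct_add, mulVec_add,
    dotProduct_sub]
  rw [dotProduct_comm v.1 w.2.1, dotProduct_comm w.1 w.2.1, dotProduct_comm v.2.2 w.1]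
  ring

lemma gramK_eq (t : Matrix (Fin n) (Fin n) K) :
    gramK t = fromBlocks (hyperbolic (-2⁻¹)) (fromRows ((2⁻¹ : K) • 1) ((2⁻¹ : K) • t))
      (fromRows ((2⁻¹ : K) • 1) ((2⁻¹ : K) • t))ᵀ 0 := by
  ext ((i | i) | i) ((j | j) | j) <;>
    simp [gramK, bas, BK_eq, hyperbolic, Pi.single_apply, one_apply, div_eq_inv_mul, eq_comm]

lemma gramK_congruent (t : Matrix (Fin n) (Fin n) K) (ht : t.IsSymm) (hchar : (2 : K) ≠ 0) :
    Congruent (gramK t) (dsum (hyperbolic (-2⁻¹ : K) : Matrix (Fin n ⊕ Fin n) _ K) t) := by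
  have hR : (hyperbolic (-2⁻¹) : Matrix (Fin n ⊕ Fin n) _ K) *
      fromRows t (1 : Matrix (Fin n) _ K) =
        -fromRows ((2⁻¹ : K) • 1) ((2⁻¹ : K) • t) := by
    rw [hyperbolic, fromBlocks_mul_fromRows]
    simp
  rw [gramK_eq]
  convert congruent_fromBlocks_of_mul_eq_neg (hyperbolic_transpose _) hR 0 using 2
  rw [transpose_fromRows, fromCols_mul_fromRows, ht.eq, Matrix.mul_smul, Matrix.mul_smul,
    Matrix.mul_one, transpose_one, Matrix.one_mul, ← add_smul, add_zero, ← two_mul,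
    mul_inv_cancel₀ hchar, one_smul]

lemma forall_BK_XY_eq_zero_iff (t : Matrix (Fin n) (Fin n) K) (hchar : (2 : K) ≠ 0)
    (v : V3 K n) : (∀ a b, BK t (a, b, 0) v = 0) ↔ ∃ z, v = (t *ᵥ z, z, z) := by
  obtain ⟨x, y, z⟩ := v
  simp only [BK_comm _ (_, _, 0), BK_eq, zero_dotProduct, add_zero, div_eq_zero_iff, hchar,
    or_false]
  constructor
  · intro h
    have hzy := dotProduct_eq_zero (z - y) fun a => by simpa [dotProduct_comm] using h a 0
    have hx := dotProduct_eq_zero (t *ᵥ z - x) fun b => by simpa [dotProduct_comm] using h 0 b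
    rw [sub_eq_zero] at hzy hx
    subst hzy hx
    exact ⟨z, rfl⟩
  · rintro ⟨z, h⟩ a b
    simp_all

lemma BK_complement (t : Matrix (Fin n) (Fin n) K) (ht : t.IsSymm) (hchar : (2 : K) ≠ 0)
    (z z' : Fin n → K) : BK t (t *ᵥ z, z, z) (t *ᵥ z', z', z') = z ⬝ᵥ t *ᵥ z' := by
  simp only [BK_eq, ht.eq, sub_self, dotProduct_zero, zero_add, dotProduct_add]
  rw [← two_mul, mul_div_cancel_left₀ _ hchar, dotProduct_mulVec, ← mulVec_transpose, ht.eq,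
    dotProduct_comm]

lemma BK_nondegenerate (t : Matrix (Fin n) (Fin n) K) (ht : t.IsSymm) (htu : IsUnit t)
    (hchar : (2 : K) ≠ 0) (v : V3 K n) (hv : ∀ w, BK t v w = 0) : v = 0 := by
  obtain ⟨z, rfl⟩ := (forall_BK_XY_eq_zero_iff t hchar v).1 fun a b => by
    rw [BK_comm]; exact hv _
  have hzt : z ᵥ* t = 0 := dotProduct_eq_zero _ fun z' => by
    rw [← dotProduct_mulVec, ← BK_complement t ht hchar]; exact hv _
  have hz : z = 0 := vecMul_injective_iff_isUnit.2 htu (hzt.trans (zero_vecMul t).symm)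
  simp [hz]

theorem kashiwara_maslov_index (hchar : (2 : K) ≠ 0)
    (t : Matrix (Fin n) (Fin n) K) (ht : t.IsSymm) (htu : IsUnit t) :
    -- q is nondegenerate
    (∀ v : V3 K n, (∀ w : V3 K n, BK t v w = 0) → v = 0) ∧
    -- its Witt class is [t]
    WittEquiv (gramK t) t ∧
    -- X ⊕ Y ⊕ 0 is a metabolic subspace
    IsMetabolic (Matrix.of fun i j : Fin n ⊕ Fin n => BK t (bas (Sum.inl i)) (bas (Sum.inl j))) ∧
    -- the orthogonal complement of X ⊕ Y ⊕ 0 is {(tz,z,z)}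
    {v : V3 K n | ∀ a b : Fin n → K, BK t (a, b, 0) v = 0} =
      {v : V3 K n | ∃ z : Fin n → K, v = (t.mulVec z, z, z)} ∧
    -- on which the form is z ↦ zᵀ t z
    (∀ z z' : Fin n → K,
      BK t (t.mulVec z, z, z) (t.mulVec z', z', z') = z ⬝ᵥ t.mulVec z') := by
  have hyp : IsMetabolic (hyperbolic (-2⁻¹ : K) : Matrix (Fin n ⊕ Fin n) _ K) :=
    isMetabolic_hyperbolic (by simpa using hchar)
  have hXY : (Matrix.of fun i j : Fin n ⊕ Fin n => BK t (bas (Sum.inl i)) (bas (Sum.inl j)))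
      = hyperbolic (-2⁻¹) :=
    (congrArg toBlocks₁₁ (gramK_eq t)).trans (toBlocks_fromBlocks₁₁ _ _ _ _)
  exact ⟨BK_nondegenerate t ht htu hchar,
    WittEquiv.of_congruent_dsum (gramK_congruent t ht hchar) hyp, hXY ▸ hyp,
    Set.ext (forall_BK_XY_eq_zero_iff t hchar), BK_complement t ht hchar⟩

end Stmt18
end
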